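/- (Supersolution profile for the slab exit problem.) Let ν ≥ 1, β > 0, 0 < ε ≤ β, R > 0, b > 0, and suppose L > 0 is large enough that −bL + 5R < 0 < L − 5R. Define constants α₅ = 1 + e^{20νβR}, α₄ = e^{−20νβR}, α₂ = min(1, 4ν²β e^{−20νβR}/ε), α₁ = εα₂/(4ν²β), α₃ = 1 + 4ν²β/(εα₂), and define u on [−bL, L] by: u(r) = α₁ e^{α₂(ε/ν)(bL−5R)} (α₃ − e^{4νβ(r−(−bL+5R))}) for r ∈ [−bL, −bL+5R]; u(r) = e^{−α₂(ε/ν) r} for r ∈ (−bL+5R, L−5R); u(r) = α₄ e^{−α₂(ε/ν)(L−5R)} (α₅ − e^{4νβ(r−(L−5R))}) for r ∈ [L−5R, L]. Then: (i) u is positive, continuous and decreasing on [−bL, L]; (ii) u is differentiable at r = −bL+5R (the one-sided derivatives agree) and at r = L−5R the jump of the derivative satisfies u'((L−5R)₊) − u'((L−5R)₋) ≤ 0; (iii) there exists λ₀ > 0 depending only on ν, β, ε, R such that for every r ∈ (−bL, L) with r ∉ {−bL+5R, L−5R}, every α ∈ [1/ν, ν], and every q ∈ [−β, β] satisfying additionally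 q ≥ ε whenever −bL+5R < r < L−5R, one has λ₀ u(r) + (α/2) u''(r) + q u'(r) ≤ 0. -/

import Mathlib

/-!
In the bulk the drift satisfies `q ≥ ε`, so the slowly decaying exponential `e^{-cr}`,
`c = α₂ε/ν`, is a supersolution: `λ + αc²/2 - qc ≤ 0` as soon as `αc ≤ ε` and `λ ≤ cε/2`.
Within `5R` of either end the drift is only bounded by `β` and may point the wrong way, so there
`u` is the concave profile `C (D - e^{4νβ (r - s)})`, for which the diffusion term
`(α/2)(4νβ)² ≥ 8νβ²` beats any drift `|q| ≤ β`.  The constants `α₁, α₃` glue value and slope at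
`-bL + 5R`; `α₄, α₅` glue the value at `L - 5R`, where the kink points down because
`c ≤ 4νβ α₄`.  Positivity follows from monotonicity and `u(L) = α₄ e^{-c(L - 5R)} > 0`.
-/

open Set

noncomputable section

/-- the constant `α₂ = min(1, 4ν²β e^{-20νβR}/ε)`. -/
def al2 (ν β ε R : ℝ) : ℝ := min 1 (4 * ν ^ 2 * β * Real.exp (-(20 * ν * β * R)) / ε)

/-- the constant `α₁ = ε α₂ / (4ν²β)`. -/
def al1 (ν β ε R : ℝ) : ℝ := ε * al2 ν β ε R / (4 * ν ^ 2 * β)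

/-- the constant `α₃ = 1 + 4ν²β/(ε α₂)`. -/
def al3 (ν β ε R : ℝ) : ℝ := 1 + 4 * ν ^ 2 * β / (ε * al2 ν β ε R)

/-- the constant `α₄ = e^{-20νβR}`. -/
def al4 (ν β R : ℝ) : ℝ := Real.exp (-(20 * ν * β * R))

/-- the constant `α₅ = 1 + e^{20νβR}`. -/
def al5 (ν β R : ℝ) : ℝ := 1 + Real.exp (20 * ν * β * R)

/-- the supermartingale profile `u` on `[-bL, L]`. -/
def profileU (ν β ε R b L : ℝ) (r : ℝ) : ℝ :=
  if r ≤ -(b * L) + 5 * R then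
    al1 ν β ε R * Real.exp (al2 ν β ε R * (ε / ν) * (b * L - 5 * R)) *
      (al3 ν β ε R - Real.exp (4 * ν * β * (r - (-(b * L) + 5 * R))))
  else if r < L - 5 * R then
    Real.exp (-(al2 ν β ε R * (ε / ν) * r))
  else
    al4 ν β R * Real.exp (-(al2 ν β ε R * (ε / ν) * (L - 5 * R))) *
      (al5 ν β R - Real.exp (4 * ν * β * (r - (L - 5 * R))))

open Filter Topology

def piecewise3 (m M : ℝ) (f g h : ℝ → ℝ) (r : ℝ) : ℝ :=
  if r ≤ m then f r else if r < M then g r else h r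

section Piecewise3

variable {m M r d : ℝ} {f g h : ℝ → ℝ}

lemma piecewise3_of_le (hr : r ≤ m) : piecewise3 m M f g h r = f r := if_pos hr

lemma piecewise3_of_mem_Ioo (hr : r ∈ Ioo m M) : piecewise3 m M f g h r = g r := by
  rw [piecewise3, if_neg (not_le.mpr hr.1), if_pos hr.2]

lemma piecewise3_of_ge (hm : m < r) (hM : M ≤ r) : piecewise3 m M f g h r = h r := by
  rw [piecewise3, if_neg (not_le.mpr hm), if_neg (not_lt.mpr hM)]

lemma piecewise3_eqOn_Ico (hfg : f m = g m) : EqOn (piecewise3 m M f g h) g (Ico m M) := by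
  rintro r ⟨hmr, hrM⟩
  rcases hmr.eq_or_lt with rfl | hmr
  · rw [piecewise3_of_le le_rfl, hfg]
  · exact piecewise3_of_mem_Ioo ⟨hmr, hrM⟩

lemma piecewise3_eqOn_Icc (hfg : f m = g m) (hgh : g M = h M) :
    EqOn (piecewise3 m M f g h) g (Icc m M) := by
  rintro r ⟨hmr, hrM⟩
  rcases hrM.lt_or_eq with hrM | rfl
  · exact piecewise3_eqOn_Ico hfg ⟨hmr, hrM⟩
  rcases hmr.eq_or_lt with rfl | hmr
  · rw [piecewise3_of_le le_rfl, hfg]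
  · rw [piecewise3_of_ge hmr le_rfl, hgh]

lemma piecewise3_eqOn_Ici (hmM : m ≤ M) (hfg : f m = g m) (hgh : g M = h M) :
    EqOn (piecewise3 m M f g h) h (Ici M) := by
  intro r hMr
  rcases (mem_Ici.mp hMr).eq_or_lt with rfl | hMr
  · rw [piecewise3_eqOn_Icc hfg hgh ⟨hmM, le_rfl⟩, hgh]
  · exact piecewise3_of_ge (hmM.trans_lt hMr) hMr.le

lemma continuous_piecewise3 (hmM : m ≤ M) (hf : Continuous f) (hg : Continuous g)
    (hh : Continuous h) (hfg : f m = g m) (hgh : g M = h M) :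
    Continuous (piecewise3 m M f g h) := by
  have hform : piecewise3 m M f g h =
      fun r => if r ≤ m then f r else if M ≤ r then h r else g r := by
    funext r
    simp only [piecewise3, ← not_lt, ite_not]
  rw [hform]
  refine Continuous.if_le hf ?_ continuous_id continuous_const fun r hr => ?_
  · exact Continuous.if_le hh hg continuous_const continuous_id fun r hr => hr ▸ hgh.symm
  · subst hr
    rcases hmM.lt_or_eq with hmM | rfl
    · rw [if_neg (not_le.mpr hmM), hfg]
    · rw [if_pos le_rfl, hfg, hgh]

lemma antitone_piecewise3 (hmM : m ≤ M) (hf : Antitone f) (hg : Antitone g) (hh : Antitone h)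
    (hfg : f m = g m) (hgh : g M = h M) : Antitone (piecewise3 m M f g h) := by
  have left : AntitoneOn (piecewise3 m M f g h) (Iic m) :=
    (hf.antitoneOn _).congr fun r hr => (piecewise3_of_le hr).symm
  have mid : AntitoneOn (piecewise3 m M f g h) (Icc m M) :=
    (hg.antitoneOn _).congr (piecewise3_eqOn_Icc hfg hgh).symm
  have right : AntitoneOn (piecewise3 m M f g h) (Ici M) :=
    (hh.antitoneOn _).congr (piecewise3_eqOn_Ici hmM hfg hgh).symm
  refine left.Iic_union_Ici ?_
  rw [← Icc_union_Ici_eq_Ici hmM]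
  exact mid.union_right right (isGreatest_Icc hmM) isLeast_Ici

lemma piecewise3_eventuallyEq_left (hr : r < m) : piecewise3 m M f g h =ᶠ[𝓝 r] f :=
  eventually_of_mem (Iio_mem_nhds hr) fun _ hx => piecewise3_of_le (le_of_lt hx)

lemma piecewise3_eventuallyEq_mid (hr : r ∈ Ioo m M) : piecewise3 m M f g h =ᶠ[𝓝 r] g :=
  eventually_of_mem (isOpen_Ioo.mem_nhds hr) fun _ hx => piecewise3_of_mem_Ioo hx

lemma piecewise3_eventuallyEq_right (hmM : m ≤ M) (hr : M < r) :
    piecewise3 m M f g h =ᶠ[𝓝 r] h :=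
  eventually_of_mem (Ioi_mem_nhds hr) fun _ hx => piecewise3_of_ge (hmM.trans_lt hx) (le_of_lt hx)

lemma hasDerivAt_piecewise3_left (hmM : m < M) (hfg : f m = g m) (hf : HasDerivAt f d m)
    (hg : HasDerivAt g d m) : HasDerivAt (piecewise3 m M f g h) d m := by
  have left : HasDerivWithinAt (piecewise3 m M f g h) d (Iic m) m :=
    hf.hasDerivWithinAt.congr (fun _ hx => piecewise3_of_le hx) (piecewise3_of_le le_rfl)
  have right : HasDerivWithinAt (piecewise3 m M f g h) d (Ici m) m :=
    hg.hasDerivWithinAt.congr_of_eventuallyEq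
      (eventually_of_mem (Ico_mem_nhdsGE hmM) (piecewise3_eqOn_Ico hfg))
      (piecewise3_eqOn_Ico hfg ⟨le_rfl, hmM⟩)
  have := left.union right
  rwa [Iic_union_Ici, hasDerivWithinAt_univ] at this

lemma derivWithin_Iio_piecewise3 (hmM : m < M) (hgh : g M = h M) (hg : HasDerivAt g d M) :
    derivWithin (piecewise3 m M f g h) (Iio M) M = d :=
  (hg.hasDerivWithinAt.congr_of_eventuallyEq
    (eventually_of_mem (Ioo_mem_nhdsLT hmM) fun _ hx => piecewise3_of_mem_Ioo hx)
    ((piecewise3_of_ge hmM le_rfl).trans hgh.symm)).derivWithin (uniqueDiffWithinAt_Iio M)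

lemma derivWithin_Ioi_piecewise3 (hmM : m < M) (hh : HasDerivAt h d M) :
    derivWithin (piecewise3 m M f g h) (Ioi M) M = d :=
  (hh.hasDerivWithinAt.congr (fun _ hx => piecewise3_of_ge (hmM.trans hx) (le_of_lt hx))
    (piecewise3_of_ge hmM le_rfl)).derivWithin (uniqueDiffWithinAt_Ioi M)

end Piecewise3

def shiftedGenerator (lam α q : ℝ) (u : ℝ → ℝ) (r : ℝ) : ℝ :=
  lam * u r + α / 2 * deriv (deriv u) r + q * deriv u r

lemma Filter.EventuallyEq.shiftedGenerator_eq {lam α q r : ℝ} {u v : ℝ → ℝ}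
    (h : u =ᶠ[𝓝 r] v) : shiftedGenerator lam α q u r = shiftedGenerator lam α q v r := by
  rw [shiftedGenerator, shiftedGenerator, h.eq_of_nhds, h.deriv_eq, h.deriv.deriv_eq]

def concaveExp (C D K s x : ℝ) : ℝ := C * (D - Real.exp (K * (x - s)))

section ConcaveExp

variable {C D K s x lam α q β : ℝ}

lemma hasDerivAt_concaveExp (C D K s x : ℝ) :
    HasDerivAt (concaveExp C D K s) (concaveExp (C * K) 0 K s x) x := by
  have hlin : HasDerivAt (fun x => K * (x - s)) K x := by
    simpa using ((hasDerivAt_id x).sub_const s).const_mul K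
  exact ((hlin.exp.const_sub D).const_mul C).congr_deriv (by simp only [concaveExp]; ring)

lemma deriv_concaveExp (C D K s : ℝ) :
    deriv (concaveExp C D K s) = concaveExp (C * K) 0 K s :=
  funext fun x => (hasDerivAt_concaveExp C D K s x).deriv

lemma continuous_concaveExp (C D K s : ℝ) : Continuous (concaveExp C D K s) := by
  unfold concaveExp
  fun_prop

lemma antitone_concaveExp (hC : 0 ≤ C) (hK : 0 ≤ K) : Antitone (concaveExp C D K s) :=
  fun x y hxy => by unfold concaveExp; gcongr

lemma shiftedGenerator_concaveExp_nonpos (hC : 0 ≤ C) (hK : 0 ≤ K) (hlam : 0 ≤ lam)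
    (hdrift : β ≤ α * K / 2 + q) (hD : lam * D ≤ K * β * Real.exp (K * (x - s))) :
    shiftedGenerator lam α q (concaveExp C D K s) x ≤ 0 := by
  set E := Real.exp (K * (x - s))
  have hE : 0 ≤ E := (Real.exp_pos _).le
  have hinner : lam * (D - E) - K * E * (α * K / 2 + q) ≤ 0 := by
    nlinarith [mul_nonneg hlam hE, mul_le_mul_of_nonneg_left hdrift (mul_nonneg hK hE)]
  calc shiftedGenerator lam α q (concaveExp C D K s) x
      = C * (lam * (D - E) - K * E * (α * K / 2 + q)) := by
        simp only [shiftedGenerator, deriv_concaveExp, concaveExp, E]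
        ring
    _ ≤ 0 := mul_nonpos_of_nonneg_of_nonpos hC hinner

end ConcaveExp

section ExpNegMul

variable {c x lam α q ε : ℝ}

lemma hasDerivAt_exp_neg_mul (c x : ℝ) :
    HasDerivAt (fun x => Real.exp (-(c * x))) (-c * Real.exp (-(c * x))) x := by
  have hlin : HasDerivAt (fun x => -(c * x)) (-c) x := by
    simpa using ((hasDerivAt_id x).const_mul c).fun_neg
  exact hlin.exp.congr_deriv (mul_comm _ _)

lemma deriv_exp_neg_mul (c : ℝ) :
    deriv (fun x => Real.exp (-(c * x))) = fun x => -c * Real.exp (-(c * x)) :=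
  funext fun x => (hasDerivAt_exp_neg_mul c x).deriv

lemma antitone_exp_neg_mul (hc : 0 ≤ c) : Antitone fun x => Real.exp (-(c * x)) :=
  fun _ _ hxy => Real.exp_le_exp.mpr (neg_le_neg (mul_le_mul_of_nonneg_left hxy hc))

lemma shiftedGenerator_exp_neg_mul_nonpos (hc : 0 ≤ c) (hlam : lam ≤ c * ε / 2)
    (hαc : α * c ≤ ε) (hq : ε ≤ q) :
    shiftedGenerator lam α q (fun x => Real.exp (-(c * x))) x ≤ 0 := by
  set F := Real.exp (-(c * x))
  have hinner : lam + α * c * c / 2 - q * c ≤ 0 := by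
    nlinarith [mul_le_mul_of_nonneg_right hαc hc, mul_le_mul_of_nonneg_right hq hc]
  calc shiftedGenerator lam α q (fun x => Real.exp (-(c * x))) x
      = F * (lam + α * c * c / 2 - q * c) := by
        simp only [shiftedGenerator, deriv_exp_neg_mul, deriv_const_mul_field', F]
        ring
    _ ≤ 0 := mul_nonpos_of_nonneg_of_nonpos (Real.exp_pos _).le hinner

end ExpNegMul

section Constants

variable {ν β ε R α q : ℝ}

lemma al2_pos (hν : 0 < ν) (hβ : 0 < β) (hε : 0 < ε) : 0 < al2 ν β ε R :=
  lt_min one_pos (by positivity)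

lemma al1_pos (hν : 0 < ν) (hβ : 0 < β) (hε : 0 < ε) : 0 < al1 ν β ε R := by
  have := al2_pos (R := R) hν hβ hε
  unfold al1
  positivity

lemma al3_pos (hν : 0 < ν) (hβ : 0 < β) (hε : 0 < ε) : 0 < al3 ν β ε R := by
  have := al2_pos (R := R) hν hβ hε
  unfold al3
  positivity

lemma al5_pos : 0 < al5 ν β R := by
  unfold al5
  positivity

lemma al1_mul_al3_sub_one (hν : 0 < ν) (hβ : 0 < β) (hε : 0 < ε) :
    al1 ν β ε R * (al3 ν β ε R - 1) = 1 := by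
  have := (al2_pos (R := R) hν hβ hε).ne'
  unfold al1 al3
  field_simp
  ring

lemma al1_mul_slope (hν : 0 < ν) (hβ : 0 < β) :
    al1 ν β ε R * (4 * ν * β) = al2 ν β ε R * (ε / ν) := by
  unfold al1
  field_simp

lemma al4_mul_al5_sub_one : al4 ν β R * (al5 ν β R - 1) = 1 := by
  rw [al4, al5, add_sub_cancel_left, ← Real.exp_add, neg_add_cancel, Real.exp_zero]

lemma al2_mul_le (hν : 0 < ν) (hε : 0 < ε) :
    al2 ν β ε R * (ε / ν) ≤ 4 * ν * β * al4 ν β R :=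
  calc al2 ν β ε R * (ε / ν)
      ≤ 4 * ν ^ 2 * β * Real.exp (-(20 * ν * β * R)) / ε * (ε / ν) := by
        gcongr
        exact min_le_right _ _
    _ = 4 * ν * β * al4 ν β R := by
        unfold al4
        field_simp

lemma mul_al2_mul_le (hν : 0 < ν) (hε : 0 < ε) (hα : 0 ≤ α) (hαν : α ≤ ν) :
    α * (al2 ν β ε R * (ε / ν)) ≤ ε :=
  calc α * (al2 ν β ε R * (ε / ν)) ≤ α * (1 * (ε / ν)) := by
        gcongr
        exact min_le_left _ _
    _ ≤ ν * (1 * (ε / ν)) := by gcongr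
    _ = ε := by field_simp

lemma le_drift (hν : 0 < ν) (hβ : 0 ≤ β) (hα : 1 / ν ≤ α) (hq : -β ≤ q) :
    β ≤ α * (4 * ν * β) / 2 + q := by
  have hαν : 1 ≤ α * ν := by rwa [div_le_iff₀ hν] at hα
  nlinarith [mul_le_mul_of_nonneg_right hαν hβ]

end Constants

/-- The three entries are the largest rates the left, middle and right regions allow. -/
def lam0 (ν β ε R : ℝ) : ℝ :=
  min (4 * ν * β * β * Real.exp (-(20 * ν * β * R)) / al3 ν β ε R)
    (min (al2 ν β ε R * (ε / ν) * ε / 2) (4 * ν * β * β / al5 ν β R))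

def profileLeft (ν β ε R b L : ℝ) : ℝ → ℝ :=
  concaveExp (al1 ν β ε R * Real.exp (al2 ν β ε R * (ε / ν) * (b * L - 5 * R))) (al3 ν β ε R)
    (4 * ν * β) (-(b * L) + 5 * R)

def profileMid (ν β ε R : ℝ) : ℝ → ℝ := fun r => Real.exp (-(al2 ν β ε R * (ε / ν) * r))

def profileRight (ν β ε R L : ℝ) : ℝ → ℝ :=
  concaveExp (al4 ν β R * Real.exp (-(al2 ν β ε R * (ε / ν) * (L - 5 * R)))) (al5 ν β R)
    (4 * ν * β) (L - 5 * R)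

section Profile

variable {ν β ε R b L r α q : ℝ}

lemma profileU_eq_piecewise3 :
    profileU ν β ε R b L = piecewise3 (-(b * L) + 5 * R) (L - 5 * R)
      (profileLeft ν β ε R b L) (profileMid ν β ε R) (profileRight ν β ε R L) := rfl

lemma lam0_pos (hν : 0 < ν) (hβ : 0 < β) (hε : 0 < ε) : 0 < lam0 ν β ε R := by
  have := al2_pos (R := R) hν hβ hε
  have := al3_pos (R := R) hν hβ hε
  have := al5_pos (ν := ν) (β := β) (R := R)
  unfold lam0
  exact lt_min (by positivity) (lt_min (by positivity) (by positivity))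

lemma profileLeft_eq_profileMid (hν : 0 < ν) (hβ : 0 < β) (hε : 0 < ε) :
    profileLeft ν β ε R b L (-(b * L) + 5 * R) = profileMid ν β ε R (-(b * L) + 5 * R) := by
  simp only [profileLeft, profileMid, concaveExp, sub_self, mul_zero, Real.exp_zero]
  rw [mul_right_comm, al1_mul_al3_sub_one hν hβ hε, one_mul]
  ring_nf

lemma profileMid_eq_profileRight :
    profileMid ν β ε R (L - 5 * R) = profileRight ν β ε R L (L - 5 * R) := by
  simp only [profileRight, profileMid, concaveExp, sub_self, mul_zero, Real.exp_zero]
  rw [mul_right_comm (al4 ν β R), al4_mul_al5_sub_one, one_mul]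

lemma hasDerivAt_profileMid (r : ℝ) :
    HasDerivAt (profileMid ν β ε R)
      (-(al2 ν β ε R * (ε / ν)) * profileMid ν β ε R r) r :=
  hasDerivAt_exp_neg_mul _ r

lemma hasDerivAt_profileLeft_junction (hν : 0 < ν) (hβ : 0 < β) :
    HasDerivAt (profileLeft ν β ε R b L)
      (-(al2 ν β ε R * (ε / ν)) * profileMid ν β ε R (-(b * L) + 5 * R)) (-(b * L) + 5 * R) := by
  refine (hasDerivAt_concaveExp _ _ _ _ _).congr_deriv ?_
  simp only [profileMid, concaveExp, sub_self, mul_zero, Real.exp_zero]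
  rw [mul_right_comm _ _ (4 * ν * β), al1_mul_slope hν hβ]
  ring_nf

lemma continuous_profileU (hν : 0 < ν) (hβ : 0 < β) (hε : 0 < ε)
    (hmM : -(b * L) + 5 * R ≤ L - 5 * R) : Continuous (profileU ν β ε R b L) :=
  continuous_piecewise3 hmM (continuous_concaveExp _ _ _ _) (by fun_prop)
    (continuous_concaveExp _ _ _ _) (profileLeft_eq_profileMid hν hβ hε)
    profileMid_eq_profileRight

lemma antitone_profileU (hν : 0 < ν) (hβ : 0 < β) (hε : 0 < ε)
    (hmM : -(b * L) + 5 * R ≤ L - 5 * R) : Antitone (profileU ν β ε R b L) := by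
  have := al1_pos (R := R) hν hβ hε
  have := al2_pos (R := R) hν hβ hε
  exact antitone_piecewise3 hmM (antitone_concaveExp (by positivity) (by positivity))
    (antitone_exp_neg_mul (by positivity))
    (antitone_concaveExp (by unfold al4; positivity) (by positivity))
    (profileLeft_eq_profileMid hν hβ hε) profileMid_eq_profileRight

lemma profileU_pos (hν : 0 < ν) (hβ : 0 < β) (hε : 0 < ε) (hR : 0 < R)
    (hmM : -(b * L) + 5 * R < L - 5 * R) (hr : r ≤ L) : 0 < profileU ν β ε R b L r := by
  have hL : profileU ν β ε R b L L =
      al4 ν β R * Real.exp (-(al2 ν β ε R * (ε / ν) * (L - 5 * R))) := by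
    rw [profileU_eq_piecewise3, piecewise3_of_ge (by linarith) (by linarith)]
    simp only [profileRight, concaveExp, sub_sub_cancel]
    rw [show 4 * ν * β * (5 * R) = 20 * ν * β * R by ring, al5, add_sub_cancel_right, mul_one]
  calc 0 < profileU ν β ε R b L L := by rw [hL, al4]; positivity
    _ ≤ profileU ν β ε R b L r := antitone_profileU hν hβ hε hmM.le hr

lemma differentiableAt_profileU (hν : 0 < ν) (hβ : 0 < β) (hε : 0 < ε)
    (hmM : -(b * L) + 5 * R < L - 5 * R) :
    DifferentiableAt ℝ (profileU ν β ε R b L) (-(b * L) + 5 * R) :=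
  (hasDerivAt_piecewise3_left hmM (profileLeft_eq_profileMid hν hβ hε)
    (hasDerivAt_profileLeft_junction hν hβ) (hasDerivAt_profileMid _)).differentiableAt

lemma profileU_derivWithin_jump_nonpos (hν : 0 < ν) (hε : 0 < ε)
    (hmM : -(b * L) + 5 * R < L - 5 * R) :
    derivWithin (profileU ν β ε R b L) (Ioi (L - 5 * R)) (L - 5 * R) -
      derivWithin (profileU ν β ε R b L) (Iio (L - 5 * R)) (L - 5 * R) ≤ 0 := by
  rw [profileU_eq_piecewise3, derivWithin_Ioi_piecewise3 (h := profileRight ν β ε R L) hmM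
      (hasDerivAt_concaveExp _ _ _ _ _),
    derivWithin_Iio_piecewise3 hmM profileMid_eq_profileRight (hasDerivAt_profileMid _)]
  have hslope := al2_mul_le (β := β) (R := R) hν hε
  have hE := (Real.exp_pos (-(al2 ν β ε R * (ε / ν) * (L - 5 * R)))).le
  simp only [profileMid, concaveExp, sub_self, mul_zero, Real.exp_zero]
  nlinarith [mul_le_mul_of_nonneg_right hslope hE]

lemma shiftedGenerator_profileLeft_nonpos (hν : 0 < ν) (hβ : 0 < β) (hε : 0 < ε)
    (hr : -(b * L) ≤ r) (hdrift : β ≤ α * (4 * ν * β) / 2 + q) :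
    shiftedGenerator (lam0 ν β ε R) α q (profileLeft ν β ε R b L) r ≤ 0 := by
  have := al1_pos (R := R) hν hβ hε
  refine shiftedGenerator_concaveExp_nonpos (by positivity) (by positivity)
    (lam0_pos hν hβ hε).le hdrift ?_
  calc lam0 ν β ε R * al3 ν β ε R ≤ 4 * ν * β * β * Real.exp (-(20 * ν * β * R)) :=
        (le_div_iff₀ (al3_pos hν hβ hε)).mp (min_le_left _ _)
    _ ≤ 4 * ν * β * β * Real.exp (4 * ν * β * (r - (-(b * L) + 5 * R))) := by
        gcongr
        nlinarith [mul_nonneg (by positivity : (0 : ℝ) ≤ 4 * ν * β) (sub_nonneg.mpr hr)]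

lemma shiftedGenerator_profileMid_nonpos (hν : 0 < ν) (hβ : 0 < β) (hε : 0 < ε)
    (hα : 0 ≤ α) (hαν : α ≤ ν) (hq : ε ≤ q) :
    shiftedGenerator (lam0 ν β ε R) α q (profileMid ν β ε R) r ≤ 0 := by
  have := al2_pos (R := R) hν hβ hε
  exact shiftedGenerator_exp_neg_mul_nonpos (by positivity)
    ((min_le_right _ _).trans (min_le_left _ _)) (mul_al2_mul_le hν hε hα hαν) hq

lemma shiftedGenerator_profileRight_nonpos (hν : 0 < ν) (hβ : 0 < β) (hε : 0 < ε)
    (hr : L - 5 * R ≤ r) (hdrift : β ≤ α * (4 * ν * β) / 2 + q) :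
    shiftedGenerator (lam0 ν β ε R) α q (profileRight ν β ε R L) r ≤ 0 := by
  refine shiftedGenerator_concaveExp_nonpos (by unfold al4; positivity) (by positivity)
    (lam0_pos hν hβ hε).le hdrift ?_
  calc lam0 ν β ε R * al5 ν β R ≤ 4 * ν * β * β :=
        (le_div_iff₀ al5_pos).mp ((min_le_right _ _).trans (min_le_right _ _))
    _ ≤ 4 * ν * β * β * Real.exp (4 * ν * β * (r - (L - 5 * R))) := by
        refine le_mul_of_one_le_right (by positivity) (Real.one_le_exp ?_)
        exact mul_nonneg (by positivity) (sub_nonneg.mpr hr)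

lemma shiftedGenerator_profileU_nonpos (hν : 0 < ν) (hβ : 0 < β) (hε : 0 < ε)
    (hmM : -(b * L) + 5 * R < L - 5 * R) (hr : -(b * L) < r)
    (hrm : r ≠ -(b * L) + 5 * R) (hrM : r ≠ L - 5 * R) (hα : 1 / ν ≤ α) (hαν : α ≤ ν)
    (hq : |q| ≤ β) (hq_mid : -(b * L) + 5 * R < r ∧ r < L - 5 * R → ε ≤ q) :
    shiftedGenerator (lam0 ν β ε R) α q (profileU ν β ε R b L) r ≤ 0 := by
  have hdrift := le_drift hν hβ.le hα (abs_le.mp hq).1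
  rw [profileU_eq_piecewise3]
  rcases hrm.lt_or_gt with hrm | hrm
  · rw [(piecewise3_eventuallyEq_left hrm).shiftedGenerator_eq]
    exact shiftedGenerator_profileLeft_nonpos hν hβ hε hr.le hdrift
  rcases hrM.lt_or_gt with hrM | hrM
  · rw [(piecewise3_eventuallyEq_mid ⟨hrm, hrM⟩).shiftedGenerator_eq]
    exact shiftedGenerator_profileMid_nonpos hν hβ hε ((one_div_pos.mpr hν).le.trans hα) hαν
      (hq_mid ⟨hrm, hrM⟩)
  · rw [(piecewise3_eventuallyEq_right hmM.le hrM).shiftedGenerator_eq]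
    exact shiftedGenerator_profileRight_nonpos hν hβ hε hrM.le hdrift

end Profile

theorem supersolution_profile_general (ν β ε R : ℝ)
    (hν : 1 ≤ ν) (hβ : 0 < β) (hε : 0 < ε) (hR : 0 < R) :
    -- (i) and (ii)
    (∀ b > (0:ℝ), ∀ L : ℝ, -(b * L) + 5 * R < 0 → 0 < L - 5 * R →
      (∀ r ∈ Icc (-(b * L)) L, 0 < profileU ν β ε R b L r) ∧
      ContinuousOn (profileU ν β ε R b L) (Icc (-(b * L)) L) ∧
      AntitoneOn (profileU ν β ε R b L) (Icc (-(b * L)) L) ∧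
      DifferentiableAt ℝ (profileU ν β ε R b L) (-(b * L) + 5 * R) ∧
      derivWithin (profileU ν β ε R b L) (Ioi (L - 5 * R)) (L - 5 * R) -
          derivWithin (profileU ν β ε R b L) (Iio (L - 5 * R)) (L - 5 * R) ≤ 0) ∧
    -- (iii)
    (∃ lam0 > (0:ℝ), ∀ b > (0:ℝ), ∀ L : ℝ, -(b * L) + 5 * R < 0 → 0 < L - 5 * R →
      ∀ r : ℝ, -(b * L) < r → r < L → r ≠ -(b * L) + 5 * R → r ≠ L - 5 * R →
      ∀ α : ℝ, 1 / ν ≤ α → α ≤ ν →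
      ∀ q : ℝ, |q| ≤ β → ((-(b * L) + 5 * R < r ∧ r < L - 5 * R) → ε ≤ q) →
        lam0 * profileU ν β ε R b L r +
            α / 2 * deriv (deriv (profileU ν β ε R b L)) r +
            q * deriv (profileU ν β ε R b L) r ≤ 0) := by
  have hν0 : 0 < ν := one_pos.trans_le hν
  refine ⟨fun b _ L hm hM => ?_, lam0 ν β ε R, lam0_pos hν0 hβ hε, fun b _ L hm hM => ?_⟩
  · have hmM : -(b * L) + 5 * R < L - 5 * R := hm.trans hM
    exact ⟨fun r hr => profileU_pos hν0 hβ hε hR hmM hr.2,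
      (continuous_profileU hν0 hβ hε hmM.le).continuousOn,
      (antitone_profileU hν0 hβ hε hmM.le).antitoneOn _,
      differentiableAt_profileU hν0 hβ hε hmM,
      profileU_derivWithin_jump_nonpos hν0 hε hmM⟩
  · intro r hr _ hrm hrM α hα hαν q hq hq_mid
    exact shiftedGenerator_profileU_nonpos hν0 hβ hε (hm.trans hM) hr hrm hrM hα hαν hq hq_mid

theorem supersolution_profile (ν β ε R : ℝ)
    (hν : 1 ≤ ν) (hβ : 0 < β) (hε : 0 < ε) (hεβ : ε ≤ β) (hR : 0 < R) :
    -- (i) and (ii)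
    (∀ b > (0:ℝ), ∀ L : ℝ, -(b * L) + 5 * R < 0 → 0 < L - 5 * R →
      (∀ r ∈ Icc (-(b * L)) L, 0 < profileU ν β ε R b L r) ∧
      ContinuousOn (profileU ν β ε R b L) (Icc (-(b * L)) L) ∧
      AntitoneOn (profileU ν β ε R b L) (Icc (-(b * L)) L) ∧
      DifferentiableAt ℝ (profileU ν β ε R b L) (-(b * L) + 5 * R) ∧
      derivWithin (profileU ν β ε R b L) (Ioi (L - 5 * R)) (L - 5 * R) -
          derivWithin (profileU ν β ε R b L) (Iio (L - 5 * R)) (L - 5 * R) ≤ 0) ∧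
    -- (iii)
    (∃ lam0 > (0:ℝ), ∀ b > (0:ℝ), ∀ L : ℝ, -(b * L) + 5 * R < 0 → 0 < L - 5 * R →
      ∀ r : ℝ, -(b * L) < r → r < L → r ≠ -(b * L) + 5 * R → r ≠ L - 5 * R →
      ∀ α : ℝ, 1 / ν ≤ α → α ≤ ν →
      ∀ q : ℝ, |q| ≤ β → ((-(b * L) + 5 * R < r ∧ r < L - 5 * R) → ε ≤ q) →
        lam0 * profileU ν β ε R b L r +
            α / 2 * deriv (deriv (profileU ν β ε R b L)) r +
            q * deriv (profileU ν β ε R b L) r ≤ 0) :=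
  supersolution_profile_general ν β ε R hν hβ hε hR
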